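/- arXiv:1606.08596 — 2 statements merged into one kernel-verified Lean document; each statement's English description precedes it below -/
import Mathlib

section
/- Let e⁻¹ ≤ q1 < q2 < 1. Define for q ∈ (0,1) the function H_q(z) = -q(ln z - ln q) for z ∈ (q,1] and H_q(z) = 0 for z ∈ [0,q]. Then H_{q1}(z) ≤ H_{q2}(z) for all z ∈ [0,1], with strict inequality for some z (e.g., z = 1). -/
open Real Set

/- Writing `-q (log z - log q) = z · (q/z) log (q/z)` reduces the comparison to the monotonicity of
`x ↦ x log x` on `[e⁻¹, ∞)`, and `q/z ≥ q ≥ e⁻¹` for `z ≤ 1`. Below the threshold `q₂` the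
`q₂`-curve vanishes while the `q₁`-curve is already nonpositive. -/

lemma neg_mul_log_sub_log_eq {q z : ℝ} (hq : 0 < q) (hz : 0 < z) :
    -q * (log z - log q) = z * (q / z * log (q / z)) := by
  rw [log_div hq.ne' hz.ne']
  field_simp
  ring

theorem strictMonoOn_neg_mul_log_sub_log {z : ℝ} (hz : 0 < z) :
    StrictMonoOn (fun q ↦ -q * (log z - log q)) (Ici (exp (-1) * z)) := by
  intro a ha b hb hab
  have hdiv : ∀ q ∈ Ici (exp (-1) * z), q / z ∈ Ici (exp (-1)) := fun q hq ↦
    le_div_iff₀ hz |>.mpr hq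
  have hpos : ∀ q ∈ Ici (exp (-1) * z), 0 < q := fun q hq ↦
    lt_of_lt_of_le (by positivity) hq
  simp only [neg_mul_log_sub_log_eq (hpos a ha) hz, neg_mul_log_sub_log_eq (hpos b hb) hz]
  exact mul_lt_mul_of_pos_left
    (mul_log_strictMonoOn (hdiv a ha) (hdiv b hb) (div_lt_div_of_pos_right hab hz)) hz

lemma neg_mul_log_sub_log_nonpos {q z : ℝ} (hq : 0 < q) (hqz : q ≤ z) :
    -q * (log z - log q) ≤ 0 := by
  have : log q ≤ log z := log_le_log hq hqz
  nlinarith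

theorem stmt_4 (q1 q2 : ℝ) (h1 : Real.exp (-1) ≤ q1) (h12 : q1 < q2) (h2 : q2 < 1)
    (H : ℝ → ℝ → ℝ)
    (hH : ∀ q ∈ Set.Ioo (0:ℝ) 1, ∀ z,
      H q z = if q < z then -q * (Real.log z - Real.log q) else 0) :
    (∀ z ∈ Set.Icc (0:ℝ) 1, H q1 z ≤ H q2 z) ∧ H q1 1 < H q2 1 := by
  have hq1 : 0 < q1 := (exp_pos _).trans_le h1
  have hq2 : 0 < q2 := hq1.trans h12
  have hH1 := hH q1 ⟨hq1, h12.trans h2⟩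
  have hH2 := hH q2 ⟨hq2, h2⟩
  have above_q2 : ∀ z ∈ Ioc q2 1, H q1 z < H q2 z := by
    rintro z ⟨hq2z, hz1⟩
    have hz : 0 < z := hq2.trans hq2z
    have hmem : ∀ {q}, exp (-1) ≤ q → q ∈ Ici (exp (-1) * z) := fun hq ↦
      (mul_le_of_le_one_right (exp_pos _).le hz1).trans hq
    rw [hH1, hH2, if_pos (h12.trans hq2z), if_pos hq2z]
    exact strictMonoOn_neg_mul_log_sub_log hz (hmem h1) (hmem (h1.trans h12.le)) h12
  refine ⟨fun z hz ↦ ?_, above_q2 1 ⟨h2, le_rfl⟩⟩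
  rcases lt_or_ge q2 z with hq2z | hzq2
  · exact (above_q2 z ⟨hq2z, hz.2⟩).le
  rw [hH1, hH2, if_neg hzq2.not_gt]
  split_ifs with hq1z
  · exact neg_mul_log_sub_log_nonpos hq1 hq1z.le
  · exact le_rfl
end

section
/- For the ramp alternative g(t) = c0 for t ∈ [0,t0] and g(t) = c0 + c1 t0 − c1 t for t ∈ (t0,1], with c1 > 0 and t0 ∈ [0,1), the drift h(z) = ∫_0^z g(t) dt − ∫_0^z (1/s) ∫_0^s g(t) dt ds satisfies h(z) ≤ 0 for all z ∈ [0,1] and h(z) < 0 for z ∈ (t0,1]. -/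
/-!
The drift is `h z = ∫₀ᶻ (g - ḡ)`, where `ḡ s` is the mean of `g` over `[0, s]`. The ramp `g` is
continuous and nonincreasing, so its mean over `[0, s]` dominates its value at the right endpoint:
`g ≤ ḡ`, hence `h ≤ 0`. Past the kink, `g z < g 0`, which makes `g z < ḡ z` strict, and continuity
of `g - ḡ` turns this into `h z < 0`.
-/

open Set MeasureTheory intervalIntegral

/-- The mean `(1 / s) ∫₀ˢ g`, as a `dslope` so that its value at `0` is `g 0` (for continuous `g`)
rather than the junk value `0`. -/
noncomputable def runningAverage (g : ℝ → ℝ) : ℝ → ℝ :=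
  dslope (fun s => ∫ t in (0:ℝ)..s, g t) 0

section RunningAverage

variable {g : ℝ → ℝ}

theorem runningAverage_of_ne_zero (g : ℝ → ℝ) {s : ℝ} (hs : s ≠ 0) :
    runningAverage g s = (1 / s) * ∫ t in (0:ℝ)..s, g t := by
  simp [runningAverage, dslope_of_ne _ hs, slope_def_field, div_eq_inv_mul]

theorem runningAverage_zero (hg : Continuous g) : runningAverage g 0 = g 0 := by
  rw [runningAverage, dslope_same, hg.deriv_integral]

theorem continuous_runningAverage (hg : Continuous g) : Continuous (runningAverage g) := by
  rw [← continuousOn_univ, runningAverage, continuousOn_dslope Filter.univ_mem]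
  exact ⟨fun s _ => (hg.integral_hasStrictDerivAt 0 s).hasDerivAt.continuousAt.continuousWithinAt,
    (hg.integral_hasStrictDerivAt 0 0).hasDerivAt.differentiableAt⟩

theorem le_runningAverage (hg : Continuous g) {s : ℝ} (hs : 0 ≤ s)
    (hanti : AntitoneOn g (Icc 0 s)) : g s ≤ runningAverage g s := by
  rcases hs.eq_or_lt with rfl | hs
  · exact (runningAverage_zero hg).ge
  have hmean : s * g s ≤ ∫ t in (0:ℝ)..s, g t := by
    simpa using integral_mono_on (μ := volume) hs.le intervalIntegrable_const (hg.intervalIntegrable 0 s)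
      fun t ht => hanti ht (right_mem_Icc.2 hs.le) ht.2
  rw [runningAverage_of_ne_zero g hs.ne', one_div, le_inv_mul_iff₀ hs]
  exact hmean

theorem lt_runningAverage (hg : Continuous g) {s : ℝ} (hs : 0 < s)
    (hanti : AntitoneOn g (Icc 0 s)) (hlt : g s < g 0) : g s < runningAverage g s := by
  have hmean : s * g s < ∫ t in (0:ℝ)..s, g t := by
    simpa using integral_lt_integral_of_continuousOn_of_le_of_exists_lt hs continuousOn_const
      hg.continuousOn (fun t ht => hanti (Ioc_subset_Icc_self ht) (right_mem_Icc.2 hs.le) ht.2)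
      ⟨0, left_mem_Icc.2 hs.le, hlt⟩
  rw [runningAverage_of_ne_zero g hs.ne', one_div, lt_inv_mul_iff₀ hs]
  exact hmean

theorem integral_le_integral_runningAverage (hg : Continuous g) {z : ℝ} (hz : 0 ≤ z)
    (hanti : AntitoneOn g (Icc 0 z)) :
    ∫ s in (0:ℝ)..z, g s ≤ ∫ s in (0:ℝ)..z, runningAverage g s :=
  integral_mono_on hz (hg.intervalIntegrable 0 z)
    ((continuous_runningAverage hg).intervalIntegrable 0 z) fun _ hs =>
      le_runningAverage hg hs.1 (hanti.mono (Icc_subset_Icc_right hs.2))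

theorem integral_lt_integral_runningAverage (hg : Continuous g) {z : ℝ} (hz : 0 < z)
    (hanti : AntitoneOn g (Icc 0 z)) (hlt : g z < g 0) :
    ∫ s in (0:ℝ)..z, g s < ∫ s in (0:ℝ)..z, runningAverage g s :=
  integral_lt_integral_of_continuousOn_of_le_of_exists_lt hz hg.continuousOn
    (continuous_runningAverage hg).continuousOn
    (fun _ hs => le_runningAverage hg hs.1.le (hanti.mono (Icc_subset_Icc_right hs.2)))
    ⟨z, right_mem_Icc.2 hz.le, lt_runningAverage hg hz hanti hlt⟩

end RunningAverage

theorem stmt_9_general (t0 c0 c1 : ℝ) (ht0 : t0 ∈ Set.Ico (0:ℝ) 1) (hc1 : 0 < c1)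
    (g : ℝ → ℝ) (hg : ∀ t, g t = if t ≤ t0 then c0 else c0 + c1 * t0 - c1 * t)
    (A : ℝ → ℝ)
    (hA : ∀ s ∈ Set.Ioc (0:ℝ) 1, A s = (1 / s) * ∫ t in (0:ℝ)..s, g t)
    (h : ℝ → ℝ)
    (hh : ∀ z, h z = (∫ t in (0:ℝ)..z, g t) - ∫ s in (0:ℝ)..z, A s) :
    (∀ z ∈ Set.Icc (0:ℝ) 1, h z ≤ 0) ∧ (∀ z ∈ Set.Ioc t0 1, h z < 0) := by
  have hg_min : g = fun t => min c0 (c0 + c1 * t0 - c1 * t) := by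
    funext t
    rw [hg]
    split_ifs with ht
    · exact (min_eq_left (by nlinarith)).symm
    · exact (min_eq_right (by nlinarith)).symm
  have hg_cont : Continuous g := hg_min ▸ by fun_prop
  have hg_anti : Antitone g := hg_min ▸ fun s t hst =>
    min_le_min le_rfl (by nlinarith)
  have hh_avg : ∀ z ∈ Icc (0:ℝ) 1,
      h z = (∫ t in (0:ℝ)..z, g t) - ∫ s in (0:ℝ)..z, runningAverage g s := by
    rintro z ⟨hz0, hz1⟩
    rw [hh, intervalIntegral.integral_congr_ae (f := A) (g := runningAverage g)]
    refine Filter.Eventually.of_forall fun s hs => ?_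
    rw [uIoc_of_le hz0] at hs
    rw [hA s ⟨hs.1, hs.2.trans hz1⟩, runningAverage_of_ne_zero g hs.1.ne']
  refine ⟨fun z hz => ?_, fun z hz => ?_⟩
  · rw [hh_avg z hz, sub_nonpos]
    exact integral_le_integral_runningAverage hg_cont hz.1 (hg_anti.antitoneOn _)
  · have hz0 : 0 < z := ht0.1.trans_lt hz.1
    have hlt : g z < g 0 := by
      rw [hg, hg, if_pos ht0.1, if_neg (not_le.2 hz.1)]
      nlinarith [hz.1]
    rw [hh_avg z ⟨hz0.le, hz.2⟩, sub_neg]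
    exact integral_lt_integral_runningAverage hg_cont hz0 (hg_anti.antitoneOn _) hlt

theorem stmt_9 (t0 c0 c1 : ℝ) (ht0 : t0 ∈ Set.Ico (0:ℝ) 1) (hc1 : 0 < c1)
    (g : ℝ → ℝ) (hg : ∀ t, g t = if t ≤ t0 then c0 else c0 + c1 * t0 - c1 * t)
    (A : ℝ → ℝ) (hA0 : A 0 = c0)
    (hA : ∀ s ∈ Set.Ioc (0:ℝ) 1, A s = (1 / s) * ∫ t in (0:ℝ)..s, g t)
    (h : ℝ → ℝ)
    (hh : ∀ z, h z = (∫ t in (0:ℝ)..z, g t) - ∫ s in (0:ℝ)..z, A s) :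
    (∀ z ∈ Set.Icc (0:ℝ) 1, h z ≤ 0) ∧ (∀ z ∈ Set.Ioc t0 1, h z < 0) :=
  stmt_9_general t0 c0 c1 ht0 hc1 g hg A hA h hh
end
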